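/- arXiv:2103.00079 — 2 statements merged into one kernel-verified Lean document; each statement's English description precedes it below -/
import Mathlib

section
/- Let K ≥ 2, m ≥ 1, λ ≥ 1 be integers, M = λm, and A, δ > 0 and β > 1 with β + A/δ ≤ K. Let 𝒜 := δ(𝒵_K + i𝒵_K) and let V := [I_m, β^{−1}I_m, …, β^{−(λ−1)}I_m] be the m×M matrix of λ horizontal blocks. Then for every y ∈ ℂ^M with ‖y‖_∞ ≤ A there exists q ∈ 𝒜^M such that ‖Vy − Vq‖_2 ≤ √(2m) · β^{−(λ−1)} · δ. -/
open scoped Real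
open Complex

set_option linter.unusedVariables false

noncomputable section

/-- Wrap-around distance on `ℝ` (distance to the nearest integer). -/
def distT (t : ℝ) : ℝ := ⨅ n : ℤ, |t - (n : ℝ)|

/-- Euclidean norm of a complex vector. -/
def norm2 {n : ℕ} (y : Fin n → ℂ) : ℝ := Real.sqrt (∑ i, ‖y i‖ ^ 2)

/-- Total variation norm of the atomic measure with amplitudes `a`. -/
def tvNorm {R : ℕ} (a : Fin R → ℂ) : ℝ := ∑ j, ‖a j‖

/-- First `M` Fourier coefficients of the atomic measure `∑ j, a j • δ_{t j}`. -/
def fourierCoeffs (M : ℕ) {R : ℕ} (a : Fin R → ℂ) (t : Fin R → ℝ) : Fin M → ℂ :=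
  fun k => ∑ j, a j * Complex.exp (-2 * (Real.pi : ℂ) * Complex.I * ((k : ℕ) : ℂ) * ((t j : ℝ) : ℂ))

/-- The function `w(t) = ∑_{k<λ} β^{-k} e^{-2πikt}`. -/
def wFun (β : ℝ) (lam : ℕ) (t : ℝ) : ℂ :=
  ∑ k ∈ Finset.range lam, ((β : ℂ))⁻¹ ^ k * Complex.exp (-2 * (Real.pi : ℂ) * Complex.I * (k : ℂ) * (t : ℂ))

/-- Condensation matrix `V = [I_m, β⁻¹ I_m, …, β^{-(λ-1)} I_m]`. -/
def Vmat (β : ℝ) (m lam : ℕ) : Matrix (Fin m) (Fin (lam * m)) ℂ :=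
  Matrix.of fun i j => if (j : ℕ) % m = (i : ℕ) then ((β : ℂ))⁻¹ ^ ((j : ℕ) / m) else 0

/-- Noise-shaping matrix `H` with `1` on the diagonal and `-β` on the `m`-th subdiagonal. -/
def Hmat (β : ℝ) (m M : ℕ) : Matrix (Fin M) (Fin M) ℂ :=
  Matrix.of fun j k => if (j : ℕ) = (k : ℕ) then 1 else if (j : ℕ) = (k : ℕ) + m then -(β : ℂ) else 0

/-- `𝒵_K = {-K+1, -K+3, …, K-1}`. -/
def ZK (K : ℕ) : Set ℤ := {n | ∃ k : ℕ, k < K ∧ n = -(K : ℤ) + 1 + 2 * (k : ℤ)}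

/-- The Cartesian alphabet `𝒜 = δ(𝒵_K + i𝒵_K)`. -/
def alphabet (K : ℕ) (δ : ℝ) : Set ℂ :=
  {z | ∃ a b : ℤ, a ∈ ZK K ∧ b ∈ ZK K ∧ z = (δ : ℂ) * ((a : ℂ) + (b : ℂ) * Complex.I)}

/-- `L` is a Lipschitz bound for `φ` with respect to the wrap-around distance. -/
def LipBnd (φ : ℝ → ℂ) (L : ℝ) : Prop := ∀ s t : ℝ, ‖φ s - φ t‖ ≤ L * distT (s - t)

/-- Lipschitz seminorm `|φ|_Lip` with respect to the wrap-around distance. -/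
def lipSemi (φ : ℝ → ℂ) : ℝ := sInf {L : ℝ | 0 ≤ L ∧ LipBnd φ L}

/-- Sup norm of `φ`. -/
def supNorm (φ : ℝ → ℂ) : ℝ := sSup {x : ℝ | ∃ t : ℝ, x = ‖φ t‖}

/-- Lipschitz norm `‖φ‖_Lip = max(‖φ‖_∞, |φ|_Lip)`. -/
def lipNorm (φ : ℝ → ℂ) : ℝ := max (supNorm φ) (lipSemi φ)

/-- Dual Lipschitz norm `‖ρ‖_{Lip*}` of the atomic measure `ρ = ∑ j, u j • δ_{r j}`. -/
def lipStar {R : ℕ} (u : Fin R → ℂ) (r : Fin R → ℝ) : ℝ :=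
  sSup {x : ℝ | ∃ φ : ℝ → ℂ, lipNorm φ ≤ 1 ∧ x = ‖∑ j, u j * φ (r j)‖}

/-- `𝓔_Lip(ρ,ν)` for atomic measures. -/
def ELip {R S : ℕ} (u : Fin R → ℂ) (r : Fin R → ℝ) (v : Fin S → ℂ) (s : Fin S → ℝ) : ℝ :=
  sSup {x : ℝ | ∃ φ : ℝ → ℂ, lipNorm φ ≤ 1 ∧
    x = ‖(∑ j, u j * φ (r j)) - (∑ k, v k * φ (s k))‖}

open scoped Classical in
/-- The neighborhood index set `𝓘_j^M`. -/
def nearIdx {R S : ℕ} (r : Fin R → ℝ) (s : Fin S → ℝ) (M : ℕ) (j : Fin R) : Finset (Fin S) :=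
  Finset.univ.filter fun k => distT (r j - s k) ≤ 0.3298 / ((M : ℝ) - 1)

open scoped Classical in
/-- The residual index set `𝓘_0^M`. -/
def farIdx {R S : ℕ} (r : Fin R → ℝ) (s : Fin S → ℝ) (M : ℕ) : Finset (Fin S) :=
  Finset.univ.filter fun k => ∀ j : Fin R, k ∉ nearIdx r s M j

/-- Amplitude error `𝓔_1^M(ρ,ν)`. -/
def E1 {R S : ℕ} (u : Fin R → ℂ) (r : Fin R → ℝ) (v : Fin S → ℂ) (s : Fin S → ℝ) (M : ℕ) : ℝ :=
  ⨆ j : Fin R, ‖u j - ∑ k ∈ nearIdx r s M j, v k‖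

/-- Support error `𝓔_2^M(ρ,ν)`. -/
def E2 {R S : ℕ} (u : Fin R → ℂ) (r : Fin R → ℝ) (v : Fin S → ℂ) (s : Fin S → ℝ) (M : ℕ) : ℝ :=
  ∑ j : Fin R, ∑ k ∈ nearIdx r s M j, ‖v k‖ * distT (r j - s k) ^ 2

/-- Spurious-atom error `𝓔_3^M(ρ,ν)`. -/
def E3 {R S : ℕ} (u : Fin R → ℂ) (r : Fin R → ℝ) (v : Fin S → ℂ) (s : Fin S → ℝ) (M : ℕ) : ℝ :=
  ∑ k ∈ farIdx r s M, ‖v k‖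

/-- Mixed `ℓ∞ + ℓ²` error `𝓔^π_{∞,2}(ρ,ν)` for a permutation `π`. -/
def EInf2 {S : ℕ} (u : Fin S → ℂ) (r : Fin S → ℝ) (v : Fin S → ℂ) (s : Fin S → ℝ)
    (σ : Equiv.Perm (Fin S)) : ℝ :=
  (⨆ j, distT (r j - s (σ j))) +
    Real.sqrt (∑ j, ‖u j - v (σ j)‖ ^ 2) / Real.sqrt (∑ j, ‖u j‖ ^ 2)

end

/-!
Quantize each of the `m` rows `(y (k, i))_{k < λ}` separately by greedy first-order noise shaping
with parameter `β`: keep a state `u`, round `β u + y_k` to the nearest point `q_k` of the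
alphabet, and set `u ← β u + y_k - q_k`. The assumption `β + A/δ ≤ K` keeps `β u + y_k` inside
the box of side `2Kδ` covered by the alphabet, so each coordinate of `u` stays in `[-δ, δ]`.
The row of `V(y - q)` is `∑_k β^{-k} (y_k - q_k)`, which telescopes to `β^{-(λ-1)} u_λ`, of
modulus at most `√2 β^{-(λ-1)} δ`; summing over the `m` rows gives the bound.
-/

theorem exists_mem_ZK_abs_sub_le {K : ℕ} (hK : 1 ≤ K) {s : ℝ} (hs : |s| ≤ K) :
    ∃ a ∈ ZK K, |s - a| ≤ 1 := by
  obtain ⟨hs₁, hs₂⟩ := abs_le.1 hs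
  set k := min (K - 1) ⌊(s + K) / 2⌋₊
  refine ⟨-(K : ℤ) + 1 + 2 * (k : ℤ), ⟨k, by omega, rfl⟩, ?_⟩
  have hK' : ((K - 1 : ℕ) : ℝ) = K - 1 := by rw [Nat.cast_sub hK, Nat.cast_one]
  push_cast
  rw [abs_le]
  rcases le_total ⌊(s + K) / 2⌋₊ (K - 1) with h | h
  · have hk : k = ⌊(s + K) / 2⌋₊ := min_eq_right h
    have h₁ := Nat.floor_le (show 0 ≤ (s + K) / 2 by linarith)
    have h₂ := Nat.lt_floor_add_one ((s + K) / 2)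
    rw [hk]
    constructor <;> linarith
  · -- the floor can only exceed `K - 1` at the endpoint `s = K`
    have hk : k = K - 1 := min_eq_left h
    have h₁ : ((K - 1 : ℕ) : ℝ) ≤ (s + K) / 2 := (Nat.le_floor_iff (by linarith)).1 h
    rw [hk, hK']
    rw [hK'] at h₁
    constructor <;> linarith

theorem exists_mem_alphabet_near {K : ℕ} (hK : 1 ≤ K) {δ : ℝ} (hδ : 0 < δ) {w : ℂ}
    (hre : |w.re| ≤ K * δ) (him : |w.im| ≤ K * δ) :
    ∃ q ∈ alphabet K δ, |(w - q).re| ≤ δ ∧ |(w - q).im| ≤ δ := by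
  have scaled : ∀ x : ℝ, |x| ≤ K * δ → ∃ a ∈ ZK K, |x - δ * a| ≤ δ := by
    intro x hx
    obtain ⟨a, ha, hxa⟩ := exists_mem_ZK_abs_sub_le hK (s := x / δ) <| by
      rwa [abs_div, abs_of_pos hδ, div_le_iff₀ hδ]
    refine ⟨a, ha, ?_⟩
    rw [show x - δ * a = δ * (x / δ - a) by field_simp, abs_mul, abs_of_pos hδ]
    exact mul_le_of_le_one_right hδ.le hxa
  obtain ⟨a, ha, hxa⟩ := scaled _ hre
  obtain ⟨b, hb, hxb⟩ := scaled _ him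
  exact ⟨δ * (a + b * Complex.I), ⟨a, b, ha, hb, rfl⟩, by simpa using hxa, by simpa using hxb⟩

theorem abs_mul_add_le {β a b δ A : ℝ} (hβ : 0 ≤ β) (ha : |a| ≤ δ) (hb : |b| ≤ A) :
    |β * a + b| ≤ β * δ + A :=
  (abs_add_le _ _).trans <| by
    rw [abs_mul, abs_of_nonneg hβ]; exact add_le_add (mul_le_mul_of_nonneg_left ha hβ) hb

/-- `u` is the final state of the greedy noise-shaping recursion `u ↦ β u + f k - q k`, in which
`q k` rounds `β u + f k` into the alphabet. -/
theorem exists_noiseShaping_state {K : ℕ} (hK : 1 ≤ K) {A δ β : ℝ} (hδ : 0 < δ) (hβ : 0 < β)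
    (hparam : β * δ + A ≤ K * δ) :
    ∀ {n : ℕ} (f : Fin n → ℂ), (∀ k, ‖f k‖ ≤ A) →
      ∃ q : Fin n → ℂ, (∀ k, q k ∈ alphabet K δ) ∧ ∃ u : ℂ, |u.re| ≤ δ ∧ |u.im| ≤ δ ∧
        (β : ℂ) ^ n * ∑ k : Fin n, (β : ℂ)⁻¹ ^ (k : ℕ) * (f k - q k) = β * u
  | 0, f, _ => ⟨Fin.elim0, fun k => k.elim0, 0, by simp [hδ.le]⟩
  | n + 1, f, hf => by
    obtain ⟨q, hq, u, hu_re, hu_im, hu⟩ :=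
      exists_noiseShaping_state hK hδ hβ hparam (Fin.init f) (fun k => hf _)
    set w := (β : ℂ) * u + f (Fin.last n)
    have hw_re : |w.re| ≤ K * δ := hparam.trans' <| by
      simpa [w] using abs_mul_add_le hβ.le hu_re ((abs_re_le_norm _).trans (hf _))
    have hw_im : |w.im| ≤ K * δ := hparam.trans' <| by
      simpa [w] using abs_mul_add_le hβ.le hu_im ((abs_im_le_norm _).trans (hf _))
    obtain ⟨p, hp, hp_re, hp_im⟩ := exists_mem_alphabet_near hK hδ hw_re hw_im
    refine ⟨Fin.snoc q p, fun k => ?_, w - p, hp_re, hp_im, ?_⟩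
    · induction k using Fin.lastCases <;> simp [hp, hq]
    have hβ0 : (β : ℂ) ≠ 0 := by exact_mod_cast hβ.ne'
    simp only [Fin.sum_univ_castSucc, Fin.snoc_castSucc, Fin.snoc_last, Fin.val_castSucc,
      Fin.val_last]
    rw [mul_add, pow_succ, mul_right_comm]
    simp only [Fin.init] at hu
    rw [hu, inv_pow]
    field_simp
    ring

theorem norm2_le_of_forall_norm_le {n : ℕ} (v : Fin n → ℂ) {c : ℝ} (hc : 0 ≤ c)
    (h : ∀ i, ‖v i‖ ≤ c) : norm2 v ≤ √n * c := by
  calc norm2 v ≤ √(n * c ^ 2) := Real.sqrt_le_sqrt <| by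
        simpa using Finset.sum_le_sum (s := Finset.univ) fun i _ =>
          pow_le_pow_left₀ (norm_nonneg _) (h i) 2
    _ = √n * c := by rw [Real.sqrt_mul n.cast_nonneg, Real.sqrt_sq hc]

theorem Vmat_mulVec_apply (β : ℝ) (m lam : ℕ) (z : Fin (lam * m) → ℂ) (i : Fin m) :
    (Vmat β m lam).mulVec z i =
      ∑ k : Fin lam, (β : ℂ)⁻¹ ^ (k : ℕ) * z (finProdFinEquiv (k, i)) := by
  rw [Matrix.mulVec, dotProduct, ← finProdFinEquiv.sum_comp, Fintype.sum_prod_type]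
  refine Finset.sum_congr rfl fun k _ => ?_
  rw [Finset.sum_eq_single i]
  · simp only [Vmat, Matrix.of_apply, finProdFinEquiv_apply_val, Nat.add_mul_mod_self_left,
      Nat.mod_eq_of_lt i.isLt, ↓reduceIte, Nat.add_mul_div_left _ _ i.pos,
      Nat.div_eq_of_lt i.isLt, zero_add]
  · intro i' _ hi'
    simp only [Vmat, Matrix.of_apply, finProdFinEquiv_apply_val, Nat.add_mul_mod_self_left,
      Nat.mod_eq_of_lt i'.isLt, Fin.val_ne_of_ne hi', ↓reduceIte, zero_mul]
  · simp

theorem exists_noiseShaping {K n : ℕ} (hK : 1 ≤ K) {A δ β : ℝ} (hδ : 0 < δ) (hβ : 0 < β)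
    (hparam : β * δ + A ≤ K * δ) (f : Fin n → ℂ) (hf : ∀ k, ‖f k‖ ≤ A) :
    ∃ q : Fin n → ℂ, (∀ k, q k ∈ alphabet K δ) ∧
      ‖∑ k : Fin n, (β : ℂ)⁻¹ ^ (k : ℕ) * (f k - q k)‖ ≤ β ^ (-((n : ℤ) - 1)) * (√2 * δ) := by
  obtain ⟨q, hq, u, hu_re, hu_im, hu⟩ := exists_noiseShaping_state hK hδ hβ hparam f hf
  refine ⟨q, hq, ?_⟩
  have hu_norm : ‖u‖ ≤ √2 * δ :=
    (Complex.norm_le_sqrt_two_mul_max u).trans <| by gcongr; exact max_le hu_re hu_im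
  have hβn : (0 : ℝ) < β ^ n := pow_pos hβ n
  have hnorm := congrArg norm hu
  simp only [norm_mul, norm_pow, Complex.norm_real, Real.norm_of_nonneg hβ.le] at hnorm
  rw [show -((n : ℤ) - 1) = 1 - n by ring, zpow_sub₀ hβ.ne', zpow_one, zpow_natCast,
    div_mul_eq_mul_div, le_div_iff₀' hβn, hnorm]
  exact mul_le_mul_of_nonneg_left hu_norm hβ.le

theorem statement6_general (K m lam : ℕ) (hK : 2 ≤ K)
    (A δ β : ℝ) (hδ : 0 < δ) (hβ : 1 < β)
    (hparam : β + A / δ ≤ (K : ℝ))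
    (y : Fin (lam * m) → ℂ) (hy : ∀ j, ‖y j‖ ≤ A) :
    ∃ q : Fin (lam * m) → ℂ, (∀ j, q j ∈ alphabet K δ) ∧
      norm2 ((Vmat β m lam).mulVec y - (Vmat β m lam).mulVec q) ≤
        Real.sqrt (2 * (m : ℝ)) * β ^ (-((lam : ℤ) - 1)) * δ := by
  have hβ₀ : 0 < β := one_pos.trans hβ
  have hparam' : β * δ + A ≤ K * δ := by
    have := mul_le_mul_of_nonneg_right hparam hδ.le
    rwa [add_mul, div_mul_cancel₀ _ hδ.ne'] at this
  choose qrow hqrow hrow using fun i : Fin m =>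
    exists_noiseShaping (by omega) hδ hβ₀ hparam' (fun k : Fin lam => y (finProdFinEquiv (k, i)))
      (fun _ => hy _)
  refine ⟨fun j => qrow (finProdFinEquiv.symm j).2 (finProdFinEquiv.symm j).1,
    fun j => hqrow _ _, ?_⟩
  rw [← Matrix.mulVec_sub, Real.sqrt_mul zero_le_two,
    show √2 * √m * β ^ (-((lam : ℤ) - 1)) * δ = √m * (β ^ (-((lam : ℤ) - 1)) * (√2 * δ)) by ring]
  refine norm2_le_of_forall_norm_le _ (by positivity) fun i => ?_
  simpa only [Vmat_mulVec_apply, Pi.sub_apply, Equiv.symm_apply_apply] using hrow i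

/-- for every `y` with `‖y‖_∞ ≤ A` there is `q ∈ 𝒜^M` with
`‖Vy - Vq‖_2 ≤ √(2m) β^{-(λ-1)} δ`. -/
theorem statement6 (K m lam : ℕ) (hK : 2 ≤ K) (hm : 1 ≤ m) (hlam : 1 ≤ lam)
    (A δ β : ℝ) (hA : 0 < A) (hδ : 0 < δ) (hβ : 1 < β)
    (hparam : β + A / δ ≤ (K : ℝ))
    (y : Fin (lam * m) → ℂ) (hy : ∀ j, ‖y j‖ ≤ A) :
    ∃ q : Fin (lam * m) → ℂ, (∀ j, q j ∈ alphabet K δ) ∧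
      norm2 ((Vmat β m lam).mulVec y - (Vmat β m lam).mulVec q) ≤
        Real.sqrt (2 * (m : ℝ)) * β ^ (-((lam : ℤ) - 1)) * δ :=
  statement6_general K m lam hK A δ β hδ hβ hparam y hy
end

section
/- Let C ≥ 1 and let ψ : 𝕋 → ℂ be Lipschitz with respect to |·|_𝕋 with C^{−1} ≤ |ψ(t)| ≤ C for all t ∈ 𝕋. Let ρ = Σ_{j=1}^S u_j δ_{r_j} and ν = Σ_{j=1}^S v_j δ_{s_j} be atomic measures on 𝕋 with the same number S of atoms and u ≠ 0. Then for every permutation π of {1,…,S}: 𝓔^π_{∞,2}(ρ,ν) ≤ (1 + C|ψ|_Lip + C²) · 𝓔^π_{∞,2}(ψρ, ψν) and 𝓔^π_{∞,2}(ψρ, ψν) ≤ (1 + C|ψ|_Lip + C²) · 𝓔^π_{∞,2}(ρ,ν), where ψρ := Σ_j u_j ψ(r_j) δ_{r_j} and ψν := Σ_j v_j ψ(s_j) δ_{s_j}. -/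
open scoped Real
open Complex

set_option linter.unusedVariables false

/-!
Write `D` for the support error `max_j |r j - s (σ j)|_𝕋`. The identity
`u ψ(r) - v ψ(s) = (u - v) ψ(s) + u (ψ(r) - ψ(s))` and `C⁻¹ ≤ |ψ| ≤ C` bound each of
`|u - v|` and `|u ψ(r) - v ψ(s)|` by `C` times the other plus `C |ψ|_Lip D` times the amplitude
(`u` resp. `u ψ(r)`) on the left, while `‖u‖₂` and `‖u ψ(r)‖₂` are within a factor `C` of each
other. Hence each relative ℓ² amplitude error is at most `C²` times the other plus `C |ψ|_Lip D`,
and adding the common support error `D` gives the constant `1 + C |ψ|_Lip + C²`.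
-/

lemma distT_nonneg (t : ℝ) : 0 ≤ distT t := le_ciInf fun _ => abs_nonneg _

section LipSemi

variable {φ : ℝ → ℂ}

lemma lipSemi_nonneg (h : ∃ L : ℝ, 0 ≤ L ∧ LipBnd φ L) : 0 ≤ lipSemi φ :=
  le_csInf h fun _ hL => hL.1

lemma lipBnd_lipSemi (h : ∃ L : ℝ, 0 ≤ L ∧ LipBnd φ L) : LipBnd φ (lipSemi φ) := by
  intro a b
  rcases (distT_nonneg (a - b)).eq_or_lt with h0 | hpos
  · obtain ⟨L, -, hL⟩ := h
    simpa [← h0] using hL a b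
  · rw [← div_le_iff₀ hpos]
    refine le_csInf h fun L hL => ?_
    rw [div_le_iff₀ hpos]
    exact hL.2 a b

end LipSemi

section Pointwise

variable {𝕜 : Type*} [NormedField 𝕜] {C : ℝ} {a b p q : 𝕜}

lemma norm_le_mul_norm_mul (hC : 0 < C) (hp : C⁻¹ ≤ ‖p‖) : ‖a‖ ≤ C * ‖a * p‖ := by
  calc ‖a‖ = C * (C⁻¹ * ‖a‖) := by field_simp
    _ ≤ C * ‖a * p‖ := by rw [norm_mul, mul_comm ‖a‖]; gcongr

lemma norm_mul_le_mul_norm (hp : ‖p‖ ≤ C) : ‖a * p‖ ≤ C * ‖a‖ := by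
  rw [norm_mul, mul_comm]
  gcongr

lemma norm_mul_sub_mul_le (hq : ‖q‖ ≤ C) :
    ‖a * p - b * q‖ ≤ C * ‖a - b‖ + ‖p - q‖ * ‖a‖ :=
  calc ‖a * p - b * q‖ = ‖(a - b) * q + a * (p - q)‖ := by ring_nf
    _ ≤ ‖a - b‖ * ‖q‖ + ‖a‖ * ‖p - q‖ := by
        grw [norm_add_le, norm_mul, norm_mul]
    _ ≤ C * ‖a - b‖ + ‖p - q‖ * ‖a‖ := by
        grw [hq]; rw [mul_comm ‖a‖, mul_comm C]

lemma norm_sub_le_mul_norm_mul_sub_mul (hC : 0 < C) (hq : C⁻¹ ≤ ‖q‖) :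
    ‖a - b‖ ≤ C * ‖a * p - b * q‖ + C * ‖p - q‖ * ‖a‖ := by
  have hdiff : ‖a - b‖ * ‖q‖ ≤ ‖a * p - b * q‖ + ‖p - q‖ * ‖a‖ :=
    calc ‖a - b‖ * ‖q‖ = ‖(a * p - b * q) - a * (p - q)‖ := by rw [← norm_mul]; ring_nf
      _ ≤ ‖a * p - b * q‖ + ‖p - q‖ * ‖a‖ := by
          grw [norm_sub_le, norm_mul, mul_comm ‖a‖]
  calc ‖a - b‖ ≤ C * (‖a - b‖ * ‖q‖) := by rw [← norm_mul]; exact norm_le_mul_norm_mul hC hq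
    _ ≤ C * ‖a * p - b * q‖ + C * ‖p - q‖ * ‖a‖ := by grw [hdiff]; rw [mul_add, ← mul_assoc]

end Pointwise

lemma div_le_sq_mul_div_add {x y n n' C K : ℝ} (hC : 0 ≤ C) (hK : 0 ≤ K) (hy : 0 ≤ y)
    (hn0 : 0 ≤ n) (hn'0 : 0 ≤ n') (hx : x ≤ C * y + K * n') (hn : n ≤ C * n')
    (hn' : n' ≤ C * n) :
    x / n' ≤ C ^ 2 * (y / n) + K := by
  rcases hn'0.eq_or_lt with h0 | hpos
  · rw [← h0, div_zero]
    positivity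
  have hnpos : 0 < n := hn0.lt_of_ne fun h => by rw [← h, mul_zero] at hn'; linarith
  have hratio : 1 ≤ C * n' / n := by rw [le_div_iff₀ hnpos]; linarith
  rw [div_le_iff₀ hpos]
  calc x ≤ C * y * 1 + K * n' := by rwa [mul_one]
    _ ≤ C * y * (C * n' / n) + K * n' := by gcongr
    _ = (C ^ 2 * (y / n) + K) * n' := by ring

section Norm2

variable {n : ℕ}

lemma norm2_nonneg (x : Fin n → ℂ) : 0 ≤ norm2 x := Real.sqrt_nonneg _

lemma norm2_eq_norm_toLp (x : Fin n → ℂ) :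
    norm2 x = ‖(WithLp.toLp 2 fun j => ‖x j‖ : EuclideanSpace ℝ (Fin n))‖ := by
  simp [norm2, EuclideanSpace.norm_eq]

lemma norm2_le_of_norm_le {a b : ℝ} (ha : 0 ≤ a) (hb : 0 ≤ b) {x y z : Fin n → ℂ}
    (h : ∀ j, ‖x j‖ ≤ a * ‖y j‖ + b * ‖z j‖) : norm2 x ≤ a * norm2 y + b * norm2 z := by
  set Y : EuclideanSpace ℝ (Fin n) := WithLp.toLp 2 fun j => ‖y j‖
  set Z : EuclideanSpace ℝ (Fin n) := WithLp.toLp 2 fun j => ‖z j‖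
  have hmono : norm2 x ≤ ‖a • Y + b • Z‖ := by
    rw [norm2, EuclideanSpace.norm_eq]
    gcongr with j
    have hj : 0 ≤ a * ‖y j‖ + b * ‖z j‖ := by positivity
    simpa [Y, Z, abs_of_nonneg hj] using h j
  grw [hmono, norm_add_le, norm_smul, norm_smul, norm2_eq_norm_toLp y, norm2_eq_norm_toLp z,
    Real.norm_of_nonneg ha, Real.norm_of_nonneg hb]

variable {C K : ℝ} {a b a' b' : Fin n → ℂ}

lemma norm2_le_mul_of_norm_le (hC : 0 ≤ C) (h : ∀ j, ‖a j‖ ≤ C * ‖a' j‖) :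
    norm2 a ≤ C * norm2 a' := by
  simpa using norm2_le_of_norm_le hC le_rfl (z := 0) (by simpa using h)

lemma norm2_sub_div_le (hC : 0 ≤ C) (hK : 0 ≤ K)
    (hdiff : ∀ j, ‖a' j - b' j‖ ≤ C * ‖a j - b j‖ + K * ‖a' j‖)
    (hn : ∀ j, ‖a j‖ ≤ C * ‖a' j‖) (hn' : ∀ j, ‖a' j‖ ≤ C * ‖a j‖) :
    norm2 (fun j => a' j - b' j) / norm2 a' ≤
      C ^ 2 * (norm2 (fun j => a j - b j) / norm2 a) + K :=
  div_le_sq_mul_div_add hC hK (norm2_nonneg _) (norm2_nonneg _) (norm2_nonneg _)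
    (norm2_le_of_norm_le hC hK hdiff) (norm2_le_mul_of_norm_le hC hn)
    (norm2_le_mul_of_norm_le hC hn')

end Norm2

lemma EInf2_le_of_forall_norm_le {S : ℕ} {u v u' v' : Fin S → ℂ} {r s : Fin S → ℝ}
    {σ : Equiv.Perm (Fin S)} {C L : ℝ} (hC : 0 ≤ C) (hL : 0 ≤ L)
    (hdiff : ∀ j, ‖u' j - v' (σ j)‖ ≤
      C * ‖u j - v (σ j)‖ + C * L * distT (r j - s (σ j)) * ‖u' j‖)
    (hn : ∀ j, ‖u j‖ ≤ C * ‖u' j‖) (hn' : ∀ j, ‖u' j‖ ≤ C * ‖u j‖) :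
    EInf2 u' r v' s σ ≤ (1 + C * L + C ^ 2) * EInf2 u r v s σ := by
  set D := ⨆ j, distT (r j - s (σ j))
  have hdist (j : Fin S) : distT (r j - s (σ j)) ≤ D :=
    le_ciSup (f := fun j => distT (r j - s (σ j))) (Set.finite_range _).bddAbove j
  have hD : 0 ≤ D := Real.iSup_nonneg fun j => distT_nonneg _
  have hrel := norm2_sub_div_le (b := fun j => v (σ j)) (b' := fun j => v' (σ j)) hC
    (K := C * L * D) (by positivity) (fun j => (hdiff j).trans (by grw [hdist j])) hn hn'
  have hq := div_nonneg (norm2_nonneg fun j => u j - v (σ j)) (norm2_nonneg u)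
  change D + norm2 (fun j => u' j - v' (σ j)) / norm2 u' ≤
    (1 + C * L + C ^ 2) * (D + norm2 (fun j => u j - v (σ j)) / norm2 u)
  nlinarith [mul_nonneg (mul_nonneg hC hL) hq, mul_nonneg (sq_nonneg C) hD]

section Multiplier

variable {C L : ℝ} {ψ : ℝ → ℂ} (hC : 0 < C) (hL : 0 ≤ L) (hLip : LipBnd ψ L)
  (hψ : ∀ t, C⁻¹ ≤ ‖ψ t‖ ∧ ‖ψ t‖ ≤ C)
include hC hL hLip hψ

lemma EInf2_le_EInf2_mul {S : ℕ} (u : Fin S → ℂ) (r : Fin S → ℝ) (v : Fin S → ℂ)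
    (s : Fin S → ℝ) (σ : Equiv.Perm (Fin S)) :
    EInf2 u r v s σ ≤
      (1 + C * L + C ^ 2) * EInf2 (fun j => u j * ψ (r j)) r (fun j => v j * ψ (s j)) s σ :=
  EInf2_le_of_forall_norm_le hC.le hL
    (fun j => (norm_sub_le_mul_norm_mul_sub_mul hC (hψ _).1).trans
      (by grw [hLip (r j) (s (σ j))]; rw [← mul_assoc C L]))
    (fun j => norm_mul_le_mul_norm (hψ _).2) (fun j => norm_le_mul_norm_mul hC (hψ _).1)

lemma EInf2_mul_le_EInf2 {S : ℕ} (u : Fin S → ℂ) (r : Fin S → ℝ) (v : Fin S → ℂ)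
    (s : Fin S → ℝ) (σ : Equiv.Perm (Fin S)) :
    EInf2 (fun j => u j * ψ (r j)) r (fun j => v j * ψ (s j)) s σ ≤
      (1 + C * L + C ^ 2) * EInf2 u r v s σ :=
  EInf2_le_of_forall_norm_le hC.le hL
    (fun j => (norm_mul_sub_mul_le (hψ _).2).trans
      (by
        grw [hLip (r j) (s (σ j)), norm_le_mul_norm_mul (a := u j) hC (hψ (r j)).1]
        · exact le_of_eq (by ring)
        · exact mul_nonneg hL (distT_nonneg _)))
    (fun j => norm_le_mul_norm_mul hC (hψ _).1) (fun j => norm_mul_le_mul_norm (hψ _).2)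

end Multiplier

theorem statement11_general (C : ℝ) (hC : 1 ≤ C) (ψ : ℝ → ℂ)
    (hψLip : ∃ L : ℝ, 0 ≤ L ∧ LipBnd ψ L)
    (hψ : ∀ t : ℝ, C⁻¹ ≤ ‖ψ t‖ ∧ ‖ψ t‖ ≤ C)
    (S : ℕ)
    (u : Fin S → ℂ) (r : Fin S → ℝ)
    (v : Fin S → ℂ) (s : Fin S → ℝ)
    (σ : Equiv.Perm (Fin S)) :
    EInf2 u r v s σ ≤
        (1 + C * lipSemi ψ + C ^ 2) *
          EInf2 (fun j => u j * ψ (r j)) r (fun j => v j * ψ (s j)) s σ ∧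
    EInf2 (fun j => u j * ψ (r j)) r (fun j => v j * ψ (s j)) s σ ≤
        (1 + C * lipSemi ψ + C ^ 2) * EInf2 u r v s σ := by
  have hC0 : 0 < C := zero_lt_one.trans_le hC
  have hL := lipSemi_nonneg hψLip
  have hLip := lipBnd_lipSemi hψLip
  exact ⟨EInf2_le_EInf2_mul hC0 hL hLip hψ u r v s σ,
    EInf2_mul_le_EInf2 hC0 hL hLip hψ u r v s σ⟩

/-- Lemma 4.2: for `C⁻¹ ≤ |ψ| ≤ C` Lipschitz and any permutation `σ`,
`𝓔^σ_{∞,2}(ρ,ν) ≤ (1 + C|ψ|_Lip + C²) 𝓔^σ_{∞,2}(ψρ,ψν)` and conversely. -/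
theorem statement11 (C : ℝ) (hC : 1 ≤ C) (ψ : ℝ → ℂ)
    (hψLip : ∃ L : ℝ, 0 ≤ L ∧ LipBnd ψ L)
    (hψ : ∀ t : ℝ, C⁻¹ ≤ ‖ψ t‖ ∧ ‖ψ t‖ ≤ C)
    (S : ℕ) (hS : 1 ≤ S)
    (u : Fin S → ℂ) (r : Fin S → ℝ) (hr : ∀ j, r j ∈ Set.Ico (0 : ℝ) 1)
    (hrinj : Function.Injective r) (hu : u ≠ 0)
    (v : Fin S → ℂ) (s : Fin S → ℝ) (hs : ∀ k, s k ∈ Set.Ico (0 : ℝ) 1)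
    (hsinj : Function.Injective s)
    (σ : Equiv.Perm (Fin S)) :
    EInf2 u r v s σ ≤
        (1 + C * lipSemi ψ + C ^ 2) *
          EInf2 (fun j => u j * ψ (r j)) r (fun j => v j * ψ (s j)) s σ ∧
    EInf2 (fun j => u j * ψ (r j)) r (fun j => v j * ψ (s j)) s σ ≤
        (1 + C * lipSemi ψ + C ^ 2) * EInf2 u r v s σ :=
  statement11_general C hC ψ hψLip hψ S u r v s σ
end
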